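/- arXiv:2510.04727 — 2 statements merged into one kernel-verified Lean document; each statement's English description precedes it below -/
import Mathlib

section
/- Every eigenvalue of the Normalized Directed Sheaf Hypergraph Laplacian L_N is at most 1; equivalently, I_{nd} − L_N = Q_N is positive semidefinite. Combined with positive semidefiniteness of L_N, the spectrum of L_N is contained in the interval [0,1]. -/
open Matrix Complex Finset
open scoped ComplexOrder

noncomputable section

variable {V E : Type*} [Fintype V] [DecidableEq V] [Fintype E] [DecidableEq E] {d : ℕ}

/-- The vertex set of a hyperedge `e`: the union of its tail set `T e` and head set `Hd e`. -/
def everts (T Hd : E → Finset V) (e : E) : Finset V := T e ∪ Hd e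

/-- The degree `δ_e` of a hyperedge. -/
def edeg (T Hd : E → Finset V) (e : E) : ℕ := (everts T Hd e).card

/-- The directional scalar `S^{(q)}_{u ⊴ e}`. -/
def dirS (T Hd : E → Finset V) (q : ℝ) (e : E) (u : V) : ℂ :=
  if u ∈ Hd e then 1
  else if u ∈ T e then Complex.exp (-(2 * Real.pi * q) * Complex.I)
  else 0

/-- The complex restriction map `F⃗_{u ⊴ e} = S^{(q)}_{u ⊴ e} • F_{u ⊴ e}`. -/
def Fdir (T Hd : E → Finset V) (q : ℝ) (F : V → E → Matrix (Fin d) (Fin d) ℝ)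
    (u : V) (e : E) : Matrix (Fin d) (Fin d) ℂ :=
  dirS T Hd q e u • (F u e).map (fun a => (a : ℂ))

/-- The block incidence matrix `B^{(q)} ∈ ℂ^{md × nd}`. -/
def Bmat (T Hd : E → Finset V) (q : ℝ) (F : V → E → Matrix (Fin d) (Fin d) ℝ) :
    Matrix (E × Fin d) (V × Fin d) ℂ :=
  Matrix.of fun p r =>
    if r.1 ∈ everts T Hd p.1 then Fdir T Hd q F r.1 p.1 p.2 r.2 else 0

/-- The block diagonal matrix `D_E^{-1}`, with blocks `δ_e⁻¹ • I_d`. -/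
def DEinv (T Hd : E → Finset V) (d : ℕ) : Matrix (E × Fin d) (E × Fin d) ℂ :=
  Matrix.diagonal fun p => ((edeg T Hd p.1 : ℂ))⁻¹

/-- The node degree block `D_u = Σ_{e : u ∈ e} F_{u⊴e}ᵀ F_{u⊴e}`. -/
def Dblk (T Hd : E → Finset V) (F : V → E → Matrix (Fin d) (Fin d) ℝ) (u : V) :
    Matrix (Fin d) (Fin d) ℝ :=
  ∑ e ∈ Finset.univ.filter (fun e => u ∈ everts T Hd e), (F u e)ᵀ * F u e

/-- The block diagonal node degree matrix `D_V ∈ ℝ^{nd×nd}` (viewed as a complex matrix). -/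
def DVmat (T Hd : E → Finset V) (F : V → E → Matrix (Fin d) (Fin d) ℝ) :
    Matrix (V × Fin d) (V × Fin d) ℂ :=
  Matrix.of fun p r => if p.1 = r.1 then ((Dblk T Hd F p.1 p.2 r.2 : ℝ) : ℂ) else 0

/-- The Directed Sheaf Hypergraph Laplacian `L = D_V − B^{(q)†} D_E^{-1} B^{(q)}`. -/
def Lap (T Hd : E → Finset V) (q : ℝ) (F : V → E → Matrix (Fin d) (Fin d) ℝ) :
    Matrix (V × Fin d) (V × Fin d) ℂ :=
  DVmat T Hd F - (Bmat T Hd q F)ᴴ * DEinv T Hd d * Bmat T Hd q F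

/-- The block diagonal matrix with blocks `(R u)⁻¹`; when `R u` is the positive square root
of `D_u`, this is `D_V^{-1/2}`. -/
def Pinv (R : V → Matrix (Fin d) (Fin d) ℂ) : Matrix (V × Fin d) (V × Fin d) ℂ :=
  Matrix.of fun p r => if p.1 = r.1 then (R p.1)⁻¹ p.2 r.2 else 0

/-- The Normalized Directed Sheaf Hypergraph Laplacian `L_N = D_V^{-1/2} L D_V^{-1/2}`. -/
def LapN (T Hd : E → Finset V) (q : ℝ) (F : V → E → Matrix (Fin d) (Fin d) ℝ)
    (R : V → Matrix (Fin d) (Fin d) ℂ) : Matrix (V × Fin d) (V × Fin d) ℂ :=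
  Pinv R * Lap T Hd q F * Pinv R


/-- The normalized signless Laplacian `Q_N = D_V^{-1/2} B^{(q)†} D_E^{-1} B^{(q)} D_V^{-1/2}`. -/
def QN (T Hd : E → Finset V) (q : ℝ) (F : V → E → Matrix (Fin d) (Fin d) ℝ)
    (R : V → Matrix (Fin d) (Fin d) ℂ) : Matrix (V × Fin d) (V × Fin d) ℂ :=
  Pinv R * ((Bmat T Hd q F)ᴴ * DEinv T Hd d * Bmat T Hd q F) * Pinv R

/-!
Since every directional scalar has modulus one, Cauchy–Schwarz on each hyperedge gives
`δ_e⁻¹ ‖∑_{u ∈ e} S_{u⊴e} F_{u⊴e} x_u‖² ≤ ∑_{u ∈ e} ‖F_{u⊴e} x_u‖²`; summing over the hyperedges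
says that `B^{(q)†} D_E⁻¹ B^{(q)} ≤ D_V`, i.e. `L` is positive semidefinite. Conjugating by
`D_V^{-1/2}` turns `D_V` into the identity, so `L_N = I - Q_N` is positive semidefinite, and so is
`Q_N = (B^{(q)} D_V^{-1/2})† D_E⁻¹ (B^{(q)} D_V^{-1/2})`. A matrix `A` with `A` and `I - A` both
positive semidefinite has its spectrum in `[0, 1]`.
-/

namespace Matrix

section BlockDiagonalFst

variable {m o α : Type*} [DecidableEq o]

def blockDiagonalFst [Zero α] (M : o → Matrix m m α) : Matrix (o × m) (o × m) α :=
  (blockDiagonal M).submatrix Prod.swap Prod.swap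

theorem blockDiagonalFst_apply [Zero α] (M : o → Matrix m m α) (u v : o) (i j : m) :
    blockDiagonalFst M (u, i) (v, j) = if u = v then M u i j else 0 :=
  blockDiagonal_apply' M i u j v

theorem blockDiagonalFst_mul [Fintype m] [Fintype o] [NonUnitalNonAssocSemiring α]
    (M N : o → Matrix m m α) :
    blockDiagonalFst M * blockDiagonalFst N = blockDiagonalFst fun u => M u * N u := by
  unfold blockDiagonalFst
  rw [blockDiagonal_mul M N]
  exact submatrix_mul_equiv (blockDiagonal M) (blockDiagonal N) _ (Equiv.prodComm o m) _

theorem blockDiagonalFst_one [DecidableEq m] [Zero α] [One α] :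
    blockDiagonalFst (fun _ => 1 : o → Matrix m m α) = 1 := by
  unfold blockDiagonalFst
  rw [← Pi.one_def, blockDiagonal_one]
  exact submatrix_one_equiv (α := α) (Equiv.prodComm o m)

theorem blockDiagonalFst_conjTranspose [AddMonoid α] [StarAddMonoid α] (M : o → Matrix m m α) :
    (blockDiagonalFst M)ᴴ = blockDiagonalFst fun u => (M u)ᴴ := by
  unfold blockDiagonalFst
  rw [conjTranspose_submatrix, blockDiagonal_conjTranspose]

theorem IsHermitian.blockDiagonalFst [AddMonoid α] [StarAddMonoid α] {M : o → Matrix m m α}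
    (hM : ∀ u, (M u).IsHermitian) : (blockDiagonalFst M).IsHermitian := by
  rw [IsHermitian, blockDiagonalFst_conjTranspose]
  exact congrArg _ (funext hM)

theorem dotProduct_blockDiagonalFst_mulVec [Fintype m] [Fintype o] [NonUnitalNonAssocSemiring α]
    [Star α] (M : o → Matrix m m α) (x : o × m → α) :
    star x ⬝ᵥ (blockDiagonalFst M *ᵥ x)
      = ∑ u, star (Function.curry x u) ⬝ᵥ (M u *ᵥ Function.curry x u) := by
  simp [dotProduct, mulVec, Fintype.sum_prod_type, blockDiagonalFst_apply, ite_mul]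

end BlockDiagonalFst

section QuadraticForm

variable {m n 𝕜 : Type*} [Fintype m] [Fintype n] [RCLike 𝕜]

theorem star_dotProduct_self_eq_sum_norm_sq (w : n → 𝕜) :
    star w ⬝ᵥ w = ((∑ i, ‖w i‖ ^ 2 : ℝ) : 𝕜) := by
  simp [dotProduct, RCLike.conj_mul]

theorem dotProduct_conjTranspose_mul_self_mulVec (A : Matrix m n 𝕜) (x : n → 𝕜) :
    star x ⬝ᵥ ((Aᴴ * A) *ᵥ x) = ((∑ i, ‖(A *ᵥ x) i‖ ^ 2 : ℝ) : 𝕜) := by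
  rw [← mulVec_mulVec, dotProduct_mulVec, ← star_mulVec, star_dotProduct_self_eq_sum_norm_sq]

theorem dotProduct_conjTranspose_mul_diagonal_mul_mulVec [DecidableEq m] (B : Matrix m n 𝕜)
    (w : m → ℝ) (x : n → 𝕜) :
    star x ⬝ᵥ ((Bᴴ * diagonal (fun i => (w i : 𝕜)) * B) *ᵥ x)
      = ((∑ i, w i * ‖(B *ᵥ x) i‖ ^ 2 : ℝ) : 𝕜) := by
  rw [← mulVec_mulVec, ← mulVec_mulVec, dotProduct_mulVec, ← star_mulVec]
  simp only [dotProduct, mulVec_diagonal, Pi.star_apply, RCLike.star_def]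
  push_cast
  refine Finset.sum_congr rfl fun i _ => ?_
  rw [← RCLike.conj_mul]
  ring

end QuadraticForm

section Spectrum

variable {n 𝕜 : Type*} [Fintype n] [DecidableEq n] [RCLike 𝕜] {A : Matrix n n 𝕜} {μ : 𝕜}

theorem PosSemidef.nonneg_of_mem_spectrum (hA : A.PosSemidef) (hμ : μ ∈ spectrum 𝕜 A) : 0 ≤ μ := by
  rw [hA.1.spectrum_eq_image_range] at hμ
  obtain ⟨_, ⟨i, rfl⟩, rfl⟩ := hμ
  exact RCLike.ofReal_nonneg.mpr (hA.eigenvalues_nonneg i)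

theorem PosSemidef.exists_real_mem_Icc_of_mem_spectrum (hA : A.PosSemidef)
    (h1A : (1 - A).PosSemidef) (hμ : μ ∈ spectrum 𝕜 A) : ∃ r : ℝ, μ = r ∧ 0 ≤ r ∧ r ≤ 1 := by
  have hμ' : 1 - μ ∈ spectrum 𝕜 (1 - A) := by
    rw [← map_one (algebraMap 𝕜 (Matrix n n 𝕜)), ← spectrum.singleton_sub_eq]
    exact Set.sub_mem_sub rfl hμ
  obtain ⟨hre, him⟩ := RCLike.nonneg_iff.mp (hA.nonneg_of_mem_spectrum hμ)
  obtain ⟨hre', -⟩ := RCLike.nonneg_iff.mp (h1A.nonneg_of_mem_spectrum hμ')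
  refine ⟨RCLike.re μ, (RCLike.conj_eq_iff_re.mp (RCLike.conj_eq_iff_im.mpr him)).symm, hre, ?_⟩
  simpa using hre'

end Spectrum

end Matrix

theorem inv_card_mul_norm_sum_sq_le {ι G : Type*} [SeminormedAddCommGroup G] (s : Finset ι)
    (f : ι → G) : (#s : ℝ)⁻¹ * ‖∑ i ∈ s, f i‖ ^ 2 ≤ ∑ i ∈ s, ‖f i‖ ^ 2 := by
  rcases s.eq_empty_or_nonempty with rfl | hs
  · simp
  rw [inv_mul_le_iff₀ (by exact_mod_cast hs.card_pos)]
  calc ‖∑ i ∈ s, f i‖ ^ 2 ≤ (∑ i ∈ s, ‖f i‖) ^ 2 := by gcongr; exact norm_sum_le _ _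
    _ ≤ #s * ∑ i ∈ s, ‖f i‖ ^ 2 := sq_sum_le_card_mul_sum_sq

section Hypergraph

variable (T Hd : E → Finset V) (q : ℝ) (F : V → E → Matrix (Fin d) (Fin d) ℝ)

omit [Fintype V] [Fintype E] [DecidableEq E] in
theorem norm_dirS_of_mem {e : E} {u : V} (hu : u ∈ everts T Hd e) : ‖dirS T Hd q e u‖ = 1 := by
  unfold dirS
  split_ifs with hHd hT
  · exact norm_one
  · rw [Complex.norm_exp]
    simp
  · exact absurd (Finset.mem_union.mp hu) (by tauto)

omit [Fintype E] [DecidableEq E] in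
theorem Bmat_mulVec_apply (x : V × Fin d → ℂ) (e : E) (k : Fin d) :
    (Bmat T Hd q F *ᵥ x) (e, k) = ∑ u ∈ everts T Hd e,
      dirS T Hd q e u * ((F u e).map (fun a => (a : ℂ)) *ᵥ Function.curry x u) k := by
  simp [mulVec, dotProduct, Fintype.sum_prod_type, Bmat, Fdir, ite_mul, Finset.mul_sum, mul_assoc]

omit [Fintype V] [Fintype E] in
theorem DEinv_eq_diagonal_ofReal :
    DEinv T Hd d = diagonal fun p : E × Fin d => (((edeg T Hd p.1 : ℝ)⁻¹ : ℝ) : ℂ) := by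
  simp [DEinv]

omit [Fintype V] [Fintype E] in
theorem DEinv_posSemidef : (DEinv T Hd d).PosSemidef := by
  rw [DEinv_eq_diagonal_ofReal]
  exact PosSemidef.diagonal fun p => Complex.zero_le_real.mpr (by positivity)

omit [Fintype V] [DecidableEq E] in
theorem DVmat_eq_blockDiagonalFst :
    DVmat T Hd F = blockDiagonalFst fun u => (Dblk T Hd F u).map (fun a => (a : ℂ)) := by
  ext ⟨u, i⟩ ⟨v, j⟩
  simp only [DVmat, blockDiagonalFst_apply, of_apply, map_apply]

omit [Fintype V] [DecidableEq E] in
theorem Dblk_map_eq_sum (u : V) :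
    (Dblk T Hd F u).map (fun a => (a : ℂ)) = ∑ e ∈ univ.filter (fun e => u ∈ everts T Hd e),
      ((F u e).map (fun a => (a : ℂ)))ᴴ * (F u e).map (fun a => (a : ℂ)) := by
  ext i j
  simp [Dblk, Matrix.sum_apply, mul_apply]

omit [Fintype V] [DecidableEq E] in
theorem Dblk_map_posSemidef (u : V) : ((Dblk T Hd F u).map (fun a => (a : ℂ))).PosSemidef := by
  rw [Dblk_map_eq_sum]
  exact posSemidef_sum _ fun e _ => posSemidef_conjTranspose_mul_self _

omit [Fintype V] [DecidableEq E] in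
theorem DVmat_isHermitian : (DVmat T Hd F).IsHermitian := by
  rw [DVmat_eq_blockDiagonalFst]
  exact IsHermitian.blockDiagonalFst fun u => (Dblk_map_posSemidef T Hd F u).1

omit [DecidableEq E] in
theorem dotProduct_DVmat_mulVec (x : V × Fin d → ℂ) :
    star x ⬝ᵥ (DVmat T Hd F *ᵥ x) = ((∑ u, ∑ e ∈ univ.filter (fun e => u ∈ everts T Hd e),
      ∑ k, ‖((F u e).map (fun a => (a : ℂ)) *ᵥ Function.curry x u) k‖ ^ 2 : ℝ) : ℂ) := by
  rw [DVmat_eq_blockDiagonalFst, dotProduct_blockDiagonalFst_mulVec]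
  push_cast
  refine Finset.sum_congr rfl fun u _ => ?_
  rw [Dblk_map_eq_sum, sum_mulVec, dotProduct_sum]
  refine Finset.sum_congr rfl fun e _ => ?_
  rw [dotProduct_conjTranspose_mul_self_mulVec]
  push_cast
  rfl

theorem dotProduct_conjTranspose_Bmat_mul_DEinv_mul_Bmat_mulVec (x : V × Fin d → ℂ) :
    star x ⬝ᵥ (((Bmat T Hd q F)ᴴ * DEinv T Hd d * Bmat T Hd q F) *ᵥ x)
      = ((∑ p : E × Fin d, (edeg T Hd p.1 : ℝ)⁻¹ * ‖(Bmat T Hd q F *ᵥ x) p‖ ^ 2 : ℝ) : ℂ) := by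
  rw [DEinv_eq_diagonal_ofReal]
  exact dotProduct_conjTranspose_mul_diagonal_mul_mulVec _ _ x

omit [DecidableEq E] in
theorem sum_inv_edeg_mul_norm_Bmat_mulVec_sq_le (x : V × Fin d → ℂ) :
    ∑ p : E × Fin d, (edeg T Hd p.1 : ℝ)⁻¹ * ‖(Bmat T Hd q F *ᵥ x) p‖ ^ 2
      ≤ ∑ u, ∑ e ∈ univ.filter (fun e => u ∈ everts T Hd e),
          ∑ k, ‖((F u e).map (fun a => (a : ℂ)) *ᵥ Function.curry x u) k‖ ^ 2 := by
  set g : V → E → Fin d → ℂ := fun u e => (F u e).map (fun a => (a : ℂ)) *ᵥ Function.curry x u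
  calc ∑ p : E × Fin d, (edeg T Hd p.1 : ℝ)⁻¹ * ‖(Bmat T Hd q F *ᵥ x) p‖ ^ 2
      = ∑ e, ∑ k, (#(everts T Hd e) : ℝ)⁻¹ *
          ‖∑ u ∈ everts T Hd e, dirS T Hd q e u * g u e k‖ ^ 2 := by
        simp only [Fintype.sum_prod_type, Bmat_mulVec_apply, edeg, g]
    _ ≤ ∑ e, ∑ k, ∑ u ∈ everts T Hd e, ‖dirS T Hd q e u * g u e k‖ ^ 2 := by
        gcongr with e _ k _
        exact inv_card_mul_norm_sum_sq_le _ _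
    _ = ∑ e, ∑ u ∈ everts T Hd e, ∑ k, ‖g u e k‖ ^ 2 := by
        refine Finset.sum_congr rfl fun e _ => ?_
        rw [Finset.sum_comm]
        refine Finset.sum_congr rfl fun u hu => Finset.sum_congr rfl fun k _ => ?_
        rw [norm_mul, norm_dirS_of_mem T Hd q hu, one_mul]
    _ = _ := Finset.sum_comm' (by simp)

theorem Lap_posSemidef : (Lap T Hd q F).PosSemidef := by
  refine .of_dotProduct_mulVec_nonneg ((DVmat_isHermitian T Hd F).sub
    ((DEinv_posSemidef T Hd).conjTranspose_mul_mul_same _).1) fun x => ?_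
  rw [Lap, sub_mulVec, dotProduct_sub, dotProduct_DVmat_mulVec,
    dotProduct_conjTranspose_Bmat_mul_DEinv_mul_Bmat_mulVec, ← Complex.ofReal_sub,
    Complex.zero_le_real, sub_nonneg]
  exact sum_inv_edeg_mul_norm_Bmat_mulVec_sq_le T Hd q F x

end Hypergraph

section Normalization

variable {T Hd : E → Finset V} (q : ℝ) {F : V → E → Matrix (Fin d) (Fin d) ℝ}
  {R : V → Matrix (Fin d) (Fin d) ℂ}

omit [Fintype V] in
theorem Pinv_eq_blockDiagonalFst : Pinv R = blockDiagonalFst fun u => (R u)⁻¹ := by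
  ext ⟨u, i⟩ ⟨v, j⟩
  rw [blockDiagonalFst_apply]
  rfl

omit [Fintype V] in
theorem Pinv_isHermitian (hR : ∀ u, (R u).IsHermitian) : (Pinv R).IsHermitian := by
  rw [Pinv_eq_blockDiagonalFst]
  exact IsHermitian.blockDiagonalFst fun u => (hR u).inv

omit [DecidableEq E] in
theorem Pinv_mul_DVmat_mul_Pinv (hpos : ∀ u, (Dblk T Hd F u).PosDef)
    (hRsq : ∀ u, R u * R u = (Dblk T Hd F u).map (fun a => (a : ℂ))) :
    Pinv R * DVmat T Hd F * Pinv R = 1 := by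
  rw [Pinv_eq_blockDiagonalFst, DVmat_eq_blockDiagonalFst, blockDiagonalFst_mul,
    blockDiagonalFst_mul, ← blockDiagonalFst_one]
  congr 1
  funext u
  have hRu : IsUnit (R u).det := by
    refine (isUnit_iff_isUnit_det _).mp (isUnit_of_mul_isUnit_left (y := R u) ?_)
    rw [hRsq u]
    exact (hpos u).isUnit.map Complex.ofRealHom.mapMatrix
  rw [← hRsq u, ← Matrix.mul_assoc, nonsing_inv_mul _ hRu, Matrix.one_mul, mul_nonsing_inv _ hRu]

theorem one_sub_LapN (hpos : ∀ u, (Dblk T Hd F u).PosDef)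
    (hRsq : ∀ u, R u * R u = (Dblk T Hd F u).map (fun a => (a : ℂ))) :
    1 - LapN T Hd q F R = QN T Hd q F R := by
  rw [LapN, Lap, Matrix.mul_sub, Matrix.sub_mul, Pinv_mul_DVmat_mul_Pinv hpos hRsq, sub_sub_cancel,
    QN]

theorem QN_posSemidef (hR : ∀ u, (R u).IsHermitian) : (QN T Hd q F R).PosSemidef := by
  simpa [QN, (Pinv_isHermitian hR).eq, Matrix.mul_assoc] using
    (DEinv_posSemidef T Hd).conjTranspose_mul_mul_same (Bmat T Hd q F * Pinv R)

theorem LapN_posSemidef (hR : ∀ u, (R u).IsHermitian) : (LapN T Hd q F R).PosSemidef := by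
  simpa [LapN, (Pinv_isHermitian hR).eq] using
    (Lap_posSemidef T Hd q F).conjTranspose_mul_mul_same (Pinv R)

end Normalization

theorem normalized_directed_sheaf_laplacian_spectrum_le_one_general
    (T Hd : E → Finset V) (q : ℝ) (F : V → E → Matrix (Fin d) (Fin d) ℝ)
    (R : V → Matrix (Fin d) (Fin d) ℂ)
    (hpos : ∀ u, (Dblk T Hd F u).PosDef)
    (hR : ∀ u, (R u).PosSemidef)
    (hRsq : ∀ u, R u * R u = (Dblk T Hd F u).map (fun a => (a : ℂ))) :
    (1 - LapN T Hd q F R = QN T Hd q F R) ∧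
    (QN T Hd q F R).PosSemidef ∧
    (∀ μ : ℂ, μ ∈ spectrum ℂ (LapN T Hd q F R) →
      ∃ r : ℝ, μ = (r : ℂ) ∧ 0 ≤ r ∧ r ≤ 1) := by
  have hRh : ∀ u, (R u).IsHermitian := fun u => (hR u).1
  have hsub : 1 - LapN T Hd q F R = QN T Hd q F R := one_sub_LapN q hpos hRsq
  have hQN : (QN T Hd q F R).PosSemidef := QN_posSemidef q hRh
  have hLapN : (LapN T Hd q F R).PosSemidef := LapN_posSemidef q hRh
  exact ⟨hsub, hQN, fun μ => hLapN.exists_real_mem_Icc_of_mem_spectrum (hsub ▸ hQN)⟩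

/-- Every eigenvalue of `L_N` is at most `1`: indeed `I − L_N = Q_N` is positive
semidefinite, and combined with positive semidefiniteness of `L_N` the spectrum of `L_N`
is contained in `[0, 1]` (all eigenvalues being real). -/
theorem normalized_directed_sheaf_laplacian_spectrum_le_one
    (T Hd : E → Finset V) (q : ℝ) (F : V → E → Matrix (Fin d) (Fin d) ℝ)
    (R : V → Matrix (Fin d) (Fin d) ℂ)
    (hd : 0 < d)
    (hdisj : ∀ e, Disjoint (T e) (Hd e))
    (hne : ∀ e, (everts T Hd e).Nonempty)
    (hpos : ∀ u, (Dblk T Hd F u).PosDef)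
    (hR : ∀ u, (R u).PosSemidef)
    (hRsq : ∀ u, R u * R u = (Dblk T Hd F u).map (fun a => (a : ℂ))) :
    (1 - LapN T Hd q F R = QN T Hd q F R) ∧
    (QN T Hd q F R).PosSemidef ∧
    (∀ μ : ℂ, μ ∈ spectrum ℂ (LapN T Hd q F R) →
      ∃ r : ℝ, μ = (r : ℂ) ∧ 0 ≤ r ∧ r ≤ 1) :=
  normalized_directed_sheaf_laplacian_spectrum_le_one_general T Hd q F R hpos hR hRsq

end
end

section
/- For every signal x ∈ ℂ^{nd}, the quadratic form of the (unnormalized) Directed Sheaf Hypergraph Laplacian satisfies x† L x = (1/2) Σ_{e∈E} (1/δ_e) Σ_{u,v∈e, u≠v} ‖ F⃗_{u⊴e} x_u − F⃗_{v⊴e} x_v ‖₂², where x_u ∈ ℂ^d denotes the block of x indexed by vertex u; in particular L is Hermitian and positive semidefinite. -/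
open Matrix Complex Finset
open scoped ComplexOrder

noncomputable section

variable {V E : Type*} [Fintype V] [DecidableEq V] [Fintype E] [DecidableEq E] {d : ℕ}

/-!
Write `y_{e,u} = F⃗_{u⊴e} x_u`. Because the directional scalars have modulus one on `e`,
`x† D_V x = Σ_e Σ_{u ∈ e} ‖y_{e,u}‖²`, while `(B x)_e = Σ_{u ∈ e} y_{e,u}`. Hence `x† L x` is a sum
over hyperedges of `Σ_u ‖y_u‖² − δ_e⁻¹ ‖Σ_u y_u‖²`, which Lagrange's identity turns into
`(2 δ_e)⁻¹ Σ_{u,v} ‖y_u − y_v‖²`. This is real for every `x`, which over `ℂ` forces `L` to be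
Hermitian, and it is nonnegative.
-/

theorem Matrix.isHermitian_of_forall_star_dotProduct_mulVec_real {n : Type*} [Fintype n]
    {A : Matrix n n ℂ} (h : ∀ x, star (star x ⬝ᵥ (A *ᵥ x)) = star x ⬝ᵥ (A *ᵥ x)) :
    A.IsHermitian := by
  classical
  rw [← isSymmetric_toEuclideanLin_iff, LinearMap.isSymmetric_iff_inner_map_self_real]
  intro v
  rw [EuclideanSpace.inner_eq_star_dotProduct, dotProduct_star, dotProduct_comm]
  exact congrArg (starRingEnd ℂ) (h v.ofLp)

theorem star_dotProduct_self_eq_ofReal_sum_normSq {n : Type*} [Fintype n] (a : n → ℂ) :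
    star a ⬝ᵥ a = ((∑ i, normSq (a i) : ℝ) : ℂ) := by
  simp [dotProduct, normSq_eq_conj_mul_self]

section QuadraticForms

variable {ι n R : Type*} [Fintype n]

theorem sum_sum_star_sub_dotProduct_sub [CommRing R] [StarRing R] (s : Finset ι)
    (y : ι → n → R) :
    ∑ u ∈ s, ∑ v ∈ s, star (y u - y v) ⬝ᵥ (y u - y v) =
      2 * (#s * ∑ u ∈ s, star (y u) ⬝ᵥ y u - star (∑ u ∈ s, y u) ⬝ᵥ ∑ u ∈ s, y u) := by
  simp only [star_sub, sub_dotProduct, dotProduct_sub, star_sum, sum_dotProduct, dotProduct_sum,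
    sum_sub_distrib, sum_const, nsmul_eq_mul, ← mul_sum]
  rw [sum_comm (f := fun u v => star (y v) ⬝ᵥ y u)]
  ring

theorem sum_star_dotProduct_self_sub_inv_card_mul [Field R] [StarRing R] [CharZero R]
    (s : Finset ι) (y : ι → n → R) :
    ∑ u ∈ s, star (y u) ⬝ᵥ y u - (#s : R)⁻¹ * (star (∑ u ∈ s, y u) ⬝ᵥ ∑ u ∈ s, y u) =
      2⁻¹ * (#s : R)⁻¹ * ∑ u ∈ s, ∑ v ∈ s, star (y u - y v) ⬝ᵥ (y u - y v) := by
  rcases s.eq_empty_or_nonempty with rfl | hs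
  · simp
  have hcard : (#s : R) ≠ 0 := by exact_mod_cast hs.card_pos.ne'
  rw [sum_sum_star_sub_dotProduct_sub]
  field_simp

variable [CommSemiring R] [StarRing R]

theorem star_dotProduct_sum_conjTranspose_mul_mulVec {m : Type*} [Fintype m] (s : Finset ι)
    (A : ι → Matrix m n R) (z : n → R) :
    star z ⬝ᵥ ((∑ e ∈ s, (A e)ᴴ * A e) *ᵥ z) = ∑ e ∈ s, star (A e *ᵥ z) ⬝ᵥ (A e *ᵥ z) := by
  simp only [sum_mulVec, dotProduct_sum, ← mulVec_mulVec, dotProduct_mulVec, star_mulVec]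

variable [Fintype ι] [DecidableEq ι]

theorem star_dotProduct_blockDiagonal_fst_mulVec (D : ι → Matrix n n R) (x : ι × n → R) :
    star x ⬝ᵥ (of (fun p r : ι × n => if p.1 = r.1 then D p.1 p.2 r.2 else 0) *ᵥ x) =
      ∑ i, star (Function.curry x i) ⬝ᵥ (D i *ᵥ Function.curry x i) := by
  simp [dotProduct, mulVec, Fintype.sum_prod_type, ite_mul]

theorem star_dotProduct_diagonal_fst_mulVec [DecidableEq n] (c : ι → R) (z : ι × n → R) :
    star z ⬝ᵥ (diagonal (fun p => c p.1) *ᵥ z) =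
      ∑ i, c i * (star (Function.curry z i) ⬝ᵥ Function.curry z i) := by
  simp [dotProduct, mulVec_diagonal, Fintype.sum_prod_type, mul_sum, mul_left_comm]

end QuadraticForms

omit [Fintype V] [Fintype E] [DecidableEq E] in
theorem star_dirS_mul_dirS (T Hd : E → Finset V) (q : ℝ) {e : E} {u : V}
    (hu : u ∈ everts T Hd e) : star (dirS T Hd q e u) * dirS T Hd q e u = 1 := by
  unfold dirS
  split_ifs
  · simp
  · rw [star_def, ← normSq_eq_conj_mul_self, normSq_eq_norm_sq, norm_exp]
    simp
  · simp_all [everts]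

omit [Fintype V] [DecidableEq E] in
theorem Dblk_map_ofReal (T Hd : E → Finset V) (q : ℝ) (F : V → E → Matrix (Fin d) (Fin d) ℝ)
    (u : V) :
    (Dblk T Hd F u).map ((↑) : ℝ → ℂ) =
      ∑ e ∈ univ.filter (fun e => u ∈ everts T Hd e),
        (Fdir T Hd q F u e)ᴴ * Fdir T Hd q F u e := by
  change ofRealHom.mapMatrix (∑ e ∈ _, (F u e)ᵀ * F u e) = _
  rw [map_sum]
  refine sum_congr rfl fun e he => ?_
  rw [Fdir, conjTranspose_smul, smul_mul_smul_comm, star_dirS_mul_dirS T Hd q (mem_filter.mp he).2]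
  simp only [one_smul, RingHom.mapMatrix_apply, Matrix.map_mul, conjTranspose, transpose_map,
    Matrix.map_map, Function.comp_def, star_def, conj_ofReal]
  rfl

omit [DecidableEq E] in
theorem star_dotProduct_DVmat_mulVec (T Hd : E → Finset V) (q : ℝ)
    (F : V → E → Matrix (Fin d) (Fin d) ℝ) (x : V × Fin d → ℂ) :
    star x ⬝ᵥ (DVmat T Hd F *ᵥ x) =
      ∑ e, ∑ u ∈ everts T Hd e,
        star (Fdir T Hd q F u e *ᵥ Function.curry x u) ⬝ᵥ
          (Fdir T Hd q F u e *ᵥ Function.curry x u) := by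
  refine (star_dotProduct_blockDiagonal_fst_mulVec
    (fun u => (Dblk T Hd F u).map ((↑) : ℝ → ℂ)) x).trans ?_
  simp_rw [Dblk_map_ofReal T Hd q, star_dotProduct_sum_conjTranspose_mul_mulVec]
  exact sum_comm' (by simp)

omit [Fintype E] [DecidableEq E] in
theorem curry_Bmat_mulVec (T Hd : E → Finset V) (q : ℝ) (F : V → E → Matrix (Fin d) (Fin d) ℝ)
    (x : V × Fin d → ℂ) (e : E) :
    Function.curry (Bmat T Hd q F *ᵥ x) e =
      ∑ u ∈ everts T Hd e, Fdir T Hd q F u e *ᵥ Function.curry x u := by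
  ext i
  simp [Bmat, mulVec, dotProduct, Fintype.sum_prod_type, ite_mul]

theorem star_dotProduct_Bmat_DEinv_mulVec (T Hd : E → Finset V) (q : ℝ)
    (F : V → E → Matrix (Fin d) (Fin d) ℝ) (x : V × Fin d → ℂ) :
    star x ⬝ᵥ (((Bmat T Hd q F)ᴴ * DEinv T Hd d * Bmat T Hd q F) *ᵥ x) =
      ∑ e, (edeg T Hd e : ℂ)⁻¹ *
        (star (∑ u ∈ everts T Hd e, Fdir T Hd q F u e *ᵥ Function.curry x u) ⬝ᵥ
          ∑ u ∈ everts T Hd e, Fdir T Hd q F u e *ᵥ Function.curry x u) := by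
  rw [← mulVec_mulVec, ← mulVec_mulVec, dotProduct_mulVec, ← star_mulVec, DEinv,
    star_dotProduct_diagonal_fst_mulVec (fun e => (edeg T Hd e : ℂ)⁻¹)]
  simp only [curry_Bmat_mulVec]

theorem star_dotProduct_Lap_mulVec (T Hd : E → Finset V) (q : ℝ)
    (F : V → E → Matrix (Fin d) (Fin d) ℝ) (x : V × Fin d → ℂ) :
    star x ⬝ᵥ (Lap T Hd q F *ᵥ x) =
      ∑ e, 2⁻¹ * (edeg T Hd e : ℂ)⁻¹ * ∑ u ∈ everts T Hd e, ∑ v ∈ everts T Hd e,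
        star (Fdir T Hd q F u e *ᵥ Function.curry x u - Fdir T Hd q F v e *ᵥ Function.curry x v) ⬝ᵥ
          (Fdir T Hd q F u e *ᵥ Function.curry x u - Fdir T Hd q F v e *ᵥ Function.curry x v) := by
  rw [Lap, sub_mulVec, dotProduct_sub, star_dotProduct_DVmat_mulVec T Hd q,
    star_dotProduct_Bmat_DEinv_mulVec, ← sum_sub_distrib]
  exact sum_congr rfl fun e _ => sum_star_dotProduct_self_sub_inv_card_mul _ _

theorem star_dotProduct_Lap_mulVec_eq_sum_normSq (T Hd : E → Finset V) (q : ℝ)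
    (F : V → E → Matrix (Fin d) (Fin d) ℝ) (x : V × Fin d → ℂ) :
    star x ⬝ᵥ (Lap T Hd q F *ᵥ x) =
      ((((1 : ℝ) / 2) * ∑ e : E, ((edeg T Hd e : ℝ))⁻¹ *
        ∑ u ∈ everts T Hd e, ∑ v ∈ (everts T Hd e).erase u,
          ∑ i : Fin d, normSq
            ((Fdir T Hd q F u e *ᵥ Function.curry x u) i -
              (Fdir T Hd q F v e *ᵥ Function.curry x v) i) : ℝ) : ℂ) := by
  simp_rw [star_dotProduct_Lap_mulVec, star_dotProduct_self_eq_ofReal_sum_normSq, Pi.sub_apply]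
  push_cast
  rw [mul_sum]
  refine sum_congr rfl fun e _ => ?_
  rw [one_div, ← mul_assoc]
  congr 1
  exact sum_congr rfl fun u _ => (sum_erase _ (by simp)).symm

theorem directed_sheaf_laplacian_quadratic_form_general
    (T Hd : E → Finset V) (q : ℝ) (F : V → E → Matrix (Fin d) (Fin d) ℝ) :
    (∀ x : V × Fin d → ℂ,
      star x ⬝ᵥ (Lap T Hd q F *ᵥ x) =
        ((((1 : ℝ) / 2) * ∑ e : E, ((edeg T Hd e : ℝ))⁻¹ *
          ∑ u ∈ everts T Hd e, ∑ v ∈ (everts T Hd e).erase u,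
            ∑ i : Fin d, Complex.normSq
              ((Fdir T Hd q F u e *ᵥ fun k => x (u, k)) i -
               (Fdir T Hd q F v e *ᵥ fun k => x (v, k)) i) : ℝ) : ℂ)) ∧
    (Lap T Hd q F).IsHermitian ∧ (Lap T Hd q F).PosSemidef := by
  have hquad := star_dotProduct_Lap_mulVec_eq_sum_normSq T Hd q F
  have hherm : (Lap T Hd q F).IsHermitian :=
    isHermitian_of_forall_star_dotProduct_mulVec_real fun x => by rw [hquad, star_def, conj_ofReal]
  refine ⟨hquad, hherm, .of_dotProduct_mulVec_nonneg hherm fun x => ?_⟩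
  rw [hquad]
  exact zero_le_real.mpr (by simp_rw [normSq_eq_norm_sq]; positivity)

/-- Quadratic form of the (unnormalized) Directed Sheaf Hypergraph Laplacian:
`x† L x = (1/2) Σ_e (1/δ_e) Σ_{u,v∈e, u≠v} ‖F⃗_{u⊴e} x_u − F⃗_{v⊴e} x_v‖²`;
in particular `L` is Hermitian and positive semidefinite. -/
theorem directed_sheaf_laplacian_quadratic_form
    (T Hd : E → Finset V) (q : ℝ) (F : V → E → Matrix (Fin d) (Fin d) ℝ)
    (hd : 0 < d)
    (hdisj : ∀ e, Disjoint (T e) (Hd e))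
    (hne : ∀ e, (everts T Hd e).Nonempty) :
    (∀ x : V × Fin d → ℂ,
      star x ⬝ᵥ (Lap T Hd q F *ᵥ x) =
        ((((1 : ℝ) / 2) * ∑ e : E, ((edeg T Hd e : ℝ))⁻¹ *
          ∑ u ∈ everts T Hd e, ∑ v ∈ (everts T Hd e).erase u,
            ∑ i : Fin d, Complex.normSq
              ((Fdir T Hd q F u e *ᵥ fun k => x (u, k)) i -
               (Fdir T Hd q F v e *ᵥ fun k => x (v, k)) i) : ℝ) : ℂ)) ∧
    (Lap T Hd q F).IsHermitian ∧ (Lap T Hd q F).PosSemidef :=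
  directed_sheaf_laplacian_quadratic_form_general T Hd q F

end
end
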